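/- Let λ ∈ ℂ∖{0} and b ∈ ℂ. The only invariant pairs for Ω_ℛ(λ,b) are ({0},{0}) and (Q,Q) if and only if b ≠ 1/2 (i.e., Ω_ℛ(λ,b) is an irreducible module over the N=1 Ramond algebra if and only if b ≠ 1/2). Moreover, when b = 1/2 the pair (Q, x·Q) is a nonzero proper invariant pair for Ω_ℛ(λ,1/2). -/
import Mathlib


/- STATEMENT 11: For λ ≠ 0 and b ∈ ℂ, Ω_ℛ(λ,b) is an irreducible module over the N=1
Ramond algebra (only invariant pairs ({0},{0}) and (Q,Q)) if and only if b ≠ 1/2;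
moreover for b = 1/2 the pair (Q, x·Q) is a nonzero proper invariant pair. -/

open Polynomial

noncomputable section

abbrev Qp := Polynomial ℂ

/-- `L_m(p,q) = (λ^m(x+m(b−1))·p(x−m), λ^m(x+m(b−1/2))·q(x−m))` -/
def OL (lam b : ℂ) (m : ℤ) : Qp × Qp → Qp × Qp :=
  fun w => (lam ^ m • ((X + C ((m : ℂ) * (b - 1))) * w.1.comp (X - C (m : ℂ))),
            lam ^ m • ((X + C ((m : ℂ) * (b - 1 / 2))) * w.2.comp (X - C (m : ℂ))))

/-- `G_m(p,q) = (−λ^m·q(x−m), λ^m(x+m(2b−1))·p(x−m))` -/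
def OG (lam b : ℂ) (m : ℤ) : Qp × Qp → Qp × Qp :=
  fun w => (-(lam ^ m • w.2.comp (X - C (m : ℂ))),
            lam ^ m • ((X + C ((m : ℂ) * (2 * b - 1))) * w.1.comp (X - C (m : ℂ))))

/-- `(S₀, S₁)` is an invariant pair for `Ω_ℛ(λ,b)`. -/
def OInvR (lam b : ℂ) (S₀ S₁ : Submodule ℂ Qp) : Prop :=
  ∀ m : ℤ, ∀ p ∈ S₀, ∀ q ∈ S₁,
    (OL lam b m (p, q)).1 ∈ S₀ ∧ (OL lam b m (p, q)).2 ∈ S₁ ∧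
    (OG lam b m (p, q)).1 ∈ S₀ ∧ (OG lam b m (p, q)).2 ∈ S₁

/-- the subspace `x·ℂ[x]` -/
def xQ : Submodule ℂ Qp := LinearMap.range (LinearMap.mulLeft ℂ (X : Qp))

/-- A subspace containing all integer shifts of a nonzero polynomial contains `1`. -/
lemma lemA : ∀ (n : ℕ) (S : Submodule ℂ Qp) (q : Qp), q ≠ 0 → q.natDegree = n →
    (∀ k : ℤ, q.comp (X - C (k:ℂ)) ∈ S) → (1:Qp) ∈ S := by
  intro n
  induction n using Nat.strong_induction_on with
  | _ n ih =>
    intro S q hq hdeg hS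
    rcases Nat.eq_zero_or_pos n with h0 | hpos
    · subst h0
      obtain ⟨a, ha⟩ := natDegree_eq_zero.mp hdeg
      have haz : a ≠ 0 := by rintro rfl; simp at ha; exact hq ha.symm
      have hqS : q ∈ S := by
        have := hS 0
        simpa using this
      have := S.smul_mem a⁻¹ hqS
      rwa [← ha, smul_C, smul_eq_mul, inv_mul_cancel₀ haz, C_1] at this
    · set q₁ := q.comp (X - C (1:ℂ)) with hq₁def
      have hdc : q₁.natDegree = q.natDegree := by
        rw [hq₁def, natDegree_comp, natDegree_X_sub_C, mul_one]
      have hlc : q₁.leadingCoeff = q.leadingCoeff := by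
        rw [hq₁def, leadingCoeff_comp (by rw [natDegree_X_sub_C]; exact one_ne_zero)]
        rw [(monic_X_sub_C (1:ℂ)).leadingCoeff, one_pow, mul_one]
      have hq₁0 : q₁ ≠ 0 := by
        intro h
        rw [h, leadingCoeff_zero] at hlc
        exact hq (leadingCoeff_eq_zero.mp hlc.symm)
      have hne : q - q₁ ≠ 0 := by
        intro h
        have heq : q = q₁ := sub_eq_zero.mp h
        have heval : ∀ x : ℂ, q.eval x = q.eval (x - 1) := by
          intro x
          conv_lhs => rw [heq]
          simp [hq₁def, eval_comp]
        have hj : ∀ j : ℕ, q.eval (-(j:ℂ)) = q.eval 0 := by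
          intro j
          induction j with
          | zero => simp
          | succ i hi =>
            have h1 := heval (-(i:ℂ))
            push_cast
            rw [show -((i:ℂ)+1) = -(i:ℂ) - 1 by ring, ← h1, hi]
        have hroot : {x : ℂ | (q - C (q.eval 0)).IsRoot x}.Infinite := by
          refine Set.infinite_of_injective_forall_mem
            (f := fun j : ℕ => -(j:ℂ)) (fun i j hij => ?_) (fun j => ?_)
          · exact Nat.cast_injective (neg_injective hij)
          · simp [IsRoot, hj j]
        have hz := eq_zero_of_infinite_isRoot _ hroot
        have hqc : q = C (q.eval 0) := sub_eq_zero.mp hz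
        have : q.natDegree = 0 := by rw [hqc]; exact natDegree_C _
        omega
      have hdlt : (q - q₁).degree < q.degree :=
        degree_sub_lt (by rw [degree_eq_natDegree hq, degree_eq_natDegree hq₁0, hdc]) hq hlc.symm
      have hdeglt : (q - q₁).natDegree < n := by
        rw [← hdeg]
        exact natDegree_lt_natDegree hne hdlt
      have hSsub : ∀ k : ℤ, (q - q₁).comp (X - C (k:ℂ)) ∈ S := by
        intro k
        rw [sub_comp]
        refine S.sub_mem (hS k) ?_
        have hcc : q₁.comp (X - C (k:ℂ)) = q.comp (X - C ((k+1 : ℤ):ℂ)) := by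
          rw [hq₁def, comp_assoc]
          congr 1
          push_cast
          simp [sub_comp]
          ring
        rw [hcc]
        exact hS (k+1)
      exact ih _ hdeglt S (q - q₁) hne rfl hSsub

lemma main_top (lam : ℂ) (hlam : lam ≠ 0) (b : ℂ) (hb : b ≠ 1/2)
    (S₀ S₁ : Submodule ℂ Qp) (hinv : OInvR lam b S₀ S₁) :
    (S₀ = ⊥ ∧ S₁ = ⊥) ∨ (S₀ = ⊤ ∧ S₁ = ⊤) := by
  have hzp : ∀ m : ℤ, lam ^ m ≠ 0 := fun m => zpow_ne_zero m hlam
  have hF1 : ∀ q ∈ S₁, ∀ m : ℤ, q.comp (X - C (m:ℂ)) ∈ S₀ := by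
    intro q hq m
    have h := (hinv m 0 S₀.zero_mem q hq).2.2.1
    simp only [OG] at h
    have h2 := S₀.neg_mem h
    rw [neg_neg] at h2
    exact (S₀.smul_mem_iff (hzp m)).mp h2
  have hF2 : ∀ p ∈ S₀, ∀ m : ℤ, (X + C ((m:ℂ) * (2*b-1))) * p.comp (X - C (m:ℂ)) ∈ S₁ := by
    intro p hp m
    have h := (hinv m p hp 0 S₁.zero_mem).2.2.2
    simp only [OG] at h
    exact (S₁.smul_mem_iff (hzp m)).mp h
  by_cases hbot : S₀ = ⊥
  · left
    refine ⟨hbot, ?_⟩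
    rw [eq_bot_iff]
    intro q hq
    have h := hF1 q hq 0
    simp only [Int.cast_zero, C_0, sub_zero, comp_X] at h
    rw [hbot] at h
    exact h
  · right
    obtain ⟨p₀, hp₀S, hp₀⟩ := (Submodule.ne_bot_iff _).mp hbot
    have hx1 : ∀ p ∈ S₀, X * p ∈ S₁ := by
      intro p hp
      have h := hF2 p hp 0
      simpa using h
    have hshift : ∀ p ∈ S₀, ∀ k : ℤ, (X * p).comp (X - C (k:ℂ)) ∈ S₀ :=
      fun p hp k => hF1 _ (hx1 p hp) k
    have hx0 : ∀ p ∈ S₀, X * p ∈ S₀ := by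
      intro p hp
      have h := hshift p hp 0
      simpa using h
    have h1 : (1:Qp) ∈ S₀ :=
      lemA ((X * p₀).natDegree) S₀ (X * p₀) (mul_ne_zero X_ne_zero hp₀) rfl (hshift p₀ hp₀S)
    have hXpow : ∀ i : ℕ, (X:Qp)^i ∈ S₀ := by
      intro i
      induction i with
      | zero => simpa using h1
      | succ j hj => rw [pow_succ, mul_comm]; exact hx0 _ hj
    have hS0top : S₀ = ⊤ := by
      rw [eq_top_iff]
      rintro f -
      induction f using Polynomial.induction_on' with
      | add p q hp hq => exact S₀.add_mem hp hq
      | monomial i a =>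
        have h := S₀.smul_mem a (hXpow i)
        rwa [smul_eq_C_mul, C_mul_X_pow_eq_monomial] at h
    refine ⟨hS0top, ?_⟩
    have hc : (2*b - 1 : ℂ) ≠ 0 := by
      intro h; exact hb (by linear_combination h/2)
    have hplus : ∀ f : Qp, (X + C (2*b-1)) * f ∈ S₁ := by
      intro f
      have hmem : f.comp (X + C (1:ℂ)) ∈ S₀ := hS0top ▸ Submodule.mem_top
      have h := hF2 _ hmem 1
      have hcomp : (f.comp (X + C (1:ℂ))).comp (X - C ((1:ℤ):ℂ)) = f := by
        rw [comp_assoc]; simp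
      rw [hcomp] at h
      simpa using h
    have hminus : ∀ f : Qp, (X - C (2*b-1)) * f ∈ S₁ := by
      intro f
      have hmem : f.comp (X - C (1:ℂ)) ∈ S₀ := hS0top ▸ Submodule.mem_top
      have h := hF2 _ hmem (-1)
      have hcomp : (f.comp (X - C (1:ℂ))).comp (X - C ((-1:ℤ):ℂ)) = f := by
        rw [comp_assoc]; simp
      rw [hcomp] at h
      have he : (X + C (((-1:ℤ):ℂ) * (2*b-1))) = X - C (2*b-1) := by
        push_cast
        rw [show (-1:ℂ) * (2*b-1) = -(2*b-1) by ring, map_neg]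
        ring
      rwa [he] at h
    rw [eq_top_iff]
    rintro f -
    have hsum : (X + C (2*b-1)) * f - (X - C (2*b-1)) * f = (2*(2*b-1)) • f := by
      rw [smul_eq_C_mul, map_mul, map_ofNat]
      ring
    have h : (2*(2*b-1)) • f ∈ S₁ := hsum ▸ S₁.sub_mem (hplus f) (hminus f)
    exact (S₁.smul_mem_iff (mul_ne_zero two_ne_zero hc)).mp h

lemma mem_xQ (w : Qp) : X * w ∈ xQ := ⟨w, by simp [LinearMap.mulLeft_apply]⟩

lemma inv_half (lam : ℂ) : OInvR lam (1/2) ⊤ xQ := by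
  intro m p _ q hq
  refine ⟨Submodule.mem_top, ?_, Submodule.mem_top, ?_⟩
  · simp only [OL]
    have h : ((1:ℂ)/2 - 1/2) = 0 := by norm_num
    rw [h, mul_zero, C_0, add_zero]
    exact xQ.smul_mem _ (mem_xQ _)
  · simp only [OG]
    have h : (2 * ((1:ℂ)/2) - 1) = 0 := by norm_num
    rw [h, mul_zero, C_0, add_zero]
    exact xQ.smul_mem _ (mem_xQ _)

lemma xQ_ne_bot : xQ ≠ ⊥ := by
  rw [Submodule.ne_bot_iff]
  refine ⟨X, ?_, X_ne_zero⟩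
  have h := mem_xQ 1
  rwa [mul_one] at h

lemma xQ_ne_top : xQ ≠ ⊤ := by
  intro h
  have h1 : (1:Qp) ∈ xQ := h ▸ Submodule.mem_top
  obtain ⟨r, hr⟩ := h1
  rw [LinearMap.mulLeft_apply] at hr
  have := congrArg (Polynomial.eval 0) hr
  simp at this

theorem stmt11 (lam : ℂ) (hlam : lam ≠ 0) (b : ℂ) :
    ((∀ S₀ S₁ : Submodule ℂ Qp, OInvR lam b S₀ S₁ →
        (S₀ = ⊥ ∧ S₁ = ⊥) ∨ (S₀ = ⊤ ∧ S₁ = ⊤)) ↔ b ≠ 1 / 2) ∧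
    (OInvR lam (1 / 2) ⊤ xQ ∧ xQ ≠ ⊥ ∧ xQ ≠ ⊤) := by
  refine ⟨⟨?_, fun hb S₀ S₁ hinv => main_top lam hlam b hb S₀ S₁ hinv⟩,
    inv_half lam, xQ_ne_bot, xQ_ne_top⟩
  intro H hb
  have hinv : OInvR lam b ⊤ xQ := by rw [hb]; exact inv_half lam
  rcases H ⊤ xQ hinv with ⟨h1, h2⟩ | ⟨h1, h2⟩
  · exact xQ_ne_bot h2
  · exact xQ_ne_top h2

end
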